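/- For every classical knot diagram (Gauss diagram realizable in the plane), every crossing c satisfies N(c) = 1; consequently Σ_{c} w(c) t^{N(c)} = w(K)·t where w(K) is the writhe, and the invariant F_K(t) = Σ_c w(c) t^{N(c)} − w(K)t is identically zero on classical knots. -/

import Mathlib

open Finset LaurentPolynomial

/-- A signed, oriented chord diagram (combinatorial Gauss diagram) with `n` chords:
the `2*n` chord endpoints on the circle are the elements of `Fin (2*n)` in (positive)
cyclic order; chord `i` has over endpoint `c⁺ = ep (i, true)`, under endpoint
`c⁻ = ep (i, false)` and a sign (writhe) `sign i ∈ {1, -1}`. -/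
structure ChordDiagram (n : ℕ) where
  ep : Fin n × Bool ≃ Fin (2 * n)
  sign : Fin n → ℤ
  sign_unit : ∀ i, sign i = 1 ∨ sign i = -1

namespace ChordDiagram

variable {n : ℕ}

/-- the over endpoint `c⁺` of a chord -/
def over' (D : ChordDiagram n) (i : Fin n) : Fin (2 * n) := D.ep (i, true)

/-- the under endpoint `c⁻` of a chord -/
def under (D : ChordDiagram n) (i : Fin n) : Fin (2 * n) := D.ep (i, false)

/-- the number of steps from `b` to `x`, travelling in the positive direction
around the circle -/
def relpos (b x : Fin (2 * n)) : ℕ := (x.val + 2 * n - b.val) % (2 * n)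

/-- `x` lies strictly between the endpoints of chord `i`, on the side swept out
going from `c⁺` to `c⁻` in the positive direction -/
def StrictlyBetween (D : ChordDiagram n) (i : Fin n) (x : Fin (2 * n)) : Prop :=
  0 < relpos (D.over' i) x ∧ relpos (D.over' i) x < relpos (D.over' i) (D.under i)

instance (D : ChordDiagram n) (i : Fin n) (x : Fin (2 * n)) :
    Decidable (D.StrictlyBetween i x) := inferInstanceAs (Decidable (_ ∧ _))

/-- two distinct chords interlink if their endpoints alternate around the circle,
i.e. exactly one endpoint of `j` lies strictly between the endpoints of `i` -/
def Interlinks (D : ChordDiagram n) (i j : Fin n) : Prop :=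
  i ≠ j ∧ Xor' (D.StrictlyBetween i (D.over' j)) (D.StrictlyBetween i (D.under j))

instance (D : ChordDiagram n) (i j : Fin n) : Decidable (D.Interlinks i j) :=
  inferInstanceAs (Decidable (_ ∧ Xor _ _))

/-- the number of chords interlinking chord `i` -/
def interlinkCount (D : ChordDiagram n) (i : Fin n) : ℕ :=
  (univ.filter fun j => D.Interlinks i j).card

/-- the number of chord endpoints lying (strictly) on one side of chord `i` -/
def sideCount (D : ChordDiagram n) (i : Fin n) : ℕ :=
  (univ.filter fun x => D.StrictlyBetween i x).card

/-- a chord is odd if it interlinks an odd number of other chords -/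
def OddChord (D : ChordDiagram n) (i : Fin n) : Prop := Odd (D.interlinkCount i)

instance (D : ChordDiagram n) (i : Fin n) : Decidable (D.OddChord i) :=
  inferInstanceAs (Decidable (Odd _))

/-- The label `N(a)` of the arc whose terminal point is `a`: the sum of the signs of
all chords whose over endpoint is met strictly before their under endpoint when
traversing the circle once in the positive direction starting inside this arc. -/
def arcLabel (D : ChordDiagram n) (a : Fin (2 * n)) : ℤ :=
  ∑ i ∈ univ.filter fun i => relpos a (D.over' i) < relpos a (D.under i), D.sign i

/-- The value `N(c)` of a chord: for a positive chord, the difference `x - y` of the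
arc labels just before `c⁺` and just before `c⁻`; for a negative chord, the difference
`z - w` of the arc labels just after `c⁺` and just after `c⁻` (the label just after an
over endpoint is the label just before it minus the sign, and the label just after an
under endpoint is the label just before it plus the sign). -/
def chordVal (D : ChordDiagram n) (i : Fin n) : ℤ :=
  if D.sign i = 1 then D.arcLabel (D.over' i) - D.arcLabel (D.under i)
  else (D.arcLabel (D.over' i) - D.sign i) - (D.arcLabel (D.under i) + D.sign i)

/-- the odd writhe `J(K) = Σ_{c odd} w(c)` -/
def oddWrithe (D : ChordDiagram n) : ℤ :=
  ∑ i ∈ univ.filter fun i => D.OddChord i, D.sign i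

/-- the odd writhe polynomial `f_K(t) = Σ_{c odd} w(c) · t^{N(c)} ∈ ℤ[t,t⁻¹]` -/
noncomputable def owp (D : ChordDiagram n) : LaurentPolynomial ℤ :=
  ∑ i ∈ univ.filter fun i => D.OddChord i, C (D.sign i) * T (D.chordVal i)

/-- evaluation of the odd writhe polynomial at a rational number `x`:
`Σ_{c odd} w(c) · x^{N(c)}` -/
def owpEval (D : ChordDiagram n) (x : ℚ) : ℚ :=
  ∑ i ∈ univ.filter fun i => D.OddChord i, (D.sign i : ℚ) * x ^ D.chordVal i

/-- the coefficient of `t^k` in a Laurent polynomial -/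
def coeffOf (f : LaurentPolynomial ℤ) (k : ℤ) : ℤ := (AddMonoidAlgebra.coeff f) k

/-- the degree `Deg f = max { |i| : coefficient of tⁱ in f is nonzero }` -/
def owpDeg (f : LaurentPolynomial ℤ) : ℕ := (AddMonoidAlgebra.coeff f).support.sup fun k => k.natAbs

/-- reversing the orientation of the knot: the cyclic order of the endpoints is
reversed, while signs and over/under data of the crossings are preserved -/
def reverse (D : ChordDiagram n) : ChordDiagram n where
  ep := D.ep.trans Fin.revPerm
  sign := D.sign
  sign_unit := D.sign_unit

/-- the mirror image: every crossing is switched, so every chord's over and under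
endpoints are exchanged and its sign is negated -/
def mirror (D : ChordDiagram n) : ChordDiagram n where
  ep := (Equiv.prodCongr (Equiv.refl (Fin n))
      ⟨fun b => !b, fun b => !b, Bool.not_not, Bool.not_not⟩).trans D.ep
  sign := fun i => -D.sign i
  sign_unit := fun i => (D.sign_unit i).elim
    (fun h => Or.inr (show -D.sign i = -1 by rw [h]))
    (fun h => Or.inl (show -D.sign i = 1 by rw [h]; ring))

/-! ### Planarity via the Euler characteristic of the carrier surface

The diagram determines a 4-valent graph (vertices = chords, edges = the `2*n` arcs of
the circle) together with a rotation system at each vertex, coming from the structure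
of a transversal crossing: for a positive crossing the counterclockwise order of the
four ends is (over-out, under-out, over-in, under-in), for a negative crossing it is
(over-out, under-in, over-in, under-out).  The diagram is realizable by a classical
(planar) knot diagram iff the resulting closed oriented carrier surface is a sphere,
i.e. iff `V - E + F = n - 2n + F = 2`.

Darts are encoded as pairs `(p, io) : Fin (2*n) × Bool`, meaning the end of an arc
at the vertex through the circle point `p`, with `io = true` for the outgoing arc
(from `p` to `p+1`) and `io = false` for the incoming arc (from `p-1` to `p`). -/

/-- the other endpoint of the chord through a given endpoint -/
def otherEnd (D : ChordDiagram n) (p : Fin (2 * n)) : Fin (2 * n) :=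
  D.ep ((D.ep.symm p).1, !(D.ep.symm p).2)

lemma otherEnd_otherEnd (D : ChordDiagram n) (p : Fin (2 * n)) :
    D.otherEnd (D.otherEnd p) = p := by
  simp [otherEnd]

/-- whether the rotation at the vertex toggles the in/out marker when passing from
the end at `p` to the end at the other endpoint of its chord -/
def tog (D : ChordDiagram n) (p : Fin (2 * n)) : Bool :=
  if D.sign (D.ep.symm p).1 = 1 then !(D.ep.symm p).2 else (D.ep.symm p).2

/-- the vertex rotation permutation on darts -/
def vertexPerm (D : ChordDiagram n) : Equiv.Perm (Fin (2 * n) × Bool) :=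
  Equiv.trans
    ⟨fun x => (x.1, xor x.2 (D.tog x.1)), fun x => (x.1, xor x.2 (D.tog x.1)),
      fun x => by simp [Bool.xor_assoc], fun x => by simp [Bool.xor_assoc]⟩
    ⟨fun x => (D.otherEnd x.1, x.2), fun x => (D.otherEnd x.1, x.2),
      fun x => by simp [otherEnd_otherEnd], fun x => by simp [otherEnd_otherEnd]⟩

/-- the edge involution on darts, matching the two ends of each arc -/
def arcPerm (D : ChordDiagram n) : Equiv.Perm (Fin (2 * n) × Bool) :=
  ⟨fun x => if x.2 then (finRotate (2 * n) x.1, false) else ((finRotate (2 * n)).symm x.1, true),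
   fun x => if x.2 then (finRotate (2 * n) x.1, false) else ((finRotate (2 * n)).symm x.1, true),
   fun x => by rcases x with ⟨p, _ | _⟩ <;> simp only [Bool.false_eq_true, if_false, if_true,
     Equiv.apply_symm_apply, Equiv.symm_apply_apply],
   fun x => by rcases x with ⟨p, _ | _⟩ <;> simp only [Bool.false_eq_true, if_false, if_true,
     Equiv.apply_symm_apply, Equiv.symm_apply_apply]⟩

/-- the face permutation on darts -/
def facePerm (D : ChordDiagram n) : Equiv.Perm (Fin (2 * n) × Bool) :=
  (D.arcPerm).trans D.vertexPerm

/-- the number of faces: the number of orbits of the face permutation -/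
noncomputable def faceCount (D : ChordDiagram n) : ℕ :=
  Nat.card (MulAction.orbitRel.Quotient (Subgroup.zpowers D.facePerm) (Fin (2 * n) × Bool))

/-- the chord diagram arises from a classical (planar) knot diagram: the carrier
surface has Euler characteristic `V - E + F = n - 2n + faceCount = 2` -/
def PlanarRealizable (D : ChordDiagram n) : Prop := D.faceCount = n + 2

end ChordDiagram

/-! Planarity means that the carrier surface is a sphere, whose first cohomology vanishes: the
coboundary from faces to arcs has image equal to the kernel of the boundary from arcs to
crossings, by a dimension count (`n + 2` faces, a connected surface, and a circle through all
crossings). So the constant cochain `1` is a coboundary, i.e. there is an Alexander numbering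
`γ` of the faces that increases by `1` across every arc. Along the knot, the value of `γ` on a
fixed side of the current arc jumps at each endpoint exactly as the arc label does, so arc labels
are differences of `γ`-values, and reading `γ` off the four faces around a crossing gives
`N(c) = 1`. -/

namespace Fin

variable {m : ℕ}

open Fin.NatCast in
theorem apply_eq_of_forall_apply_add_one [NeZero m] {α : Type*} {f : Fin m → α}
    (h : ∀ p, f (p + 1) = f p) (p q : Fin m) : f q = f p := by
  have shift : ∀ k : ℕ, f (p + k) = f p := by
    intro k
    induction k with
    | zero => simp
    | succ k ih => rw [Nat.cast_succ, ← add_assoc, h, ih]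
  simpa [Fin.cast_val_eq_self] using shift (q - p).val

theorem exists_add_one_sub_eq_of_sum_eq_zero [NeZero m] {R : Type*} [AddCommGroup R] (v : Fin m → R)
    (hv : ∑ p, v p = 0) : ∃ t : Fin m → R, ∀ p, t (p + 1) - t p = v p := by
  let w : ℕ → R := fun i => if h : i < m then v ⟨i, h⟩ else 0
  have hw : ∑ i ∈ range m, w i = 0 := by
    rw [← hv, ← Fin.sum_univ_eq_sum_range]
    exact sum_congr rfl fun p _ => dif_pos p.isLt
  refine ⟨fun p => ∑ i ∈ range p.val, w i, fun p => ?_⟩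
  have hwp : w p = v p := dif_pos p.isLt
  dsimp only
  rcases Nat.lt_or_ge (p.val + 1) m with hp | hp
  · rw [Fin.val_add_one_of_lt' hp, sum_range_succ, hwp, add_sub_cancel_left]
  · have hm : m = p.val + 1 := by have := p.isLt; omega
    have hzero : ((p + 1 : Fin m) : ℕ) = 0 := by
      rw [Fin.val_add, Fin.val_one', Nat.add_mod_mod, ← hm, Nat.mod_self]
    rw [hm, sum_range_succ, hwp] at hw
    rw [hzero, sum_range_zero, zero_sub, eq_neg_of_add_eq_zero_left hw, neg_neg]

end Fin

namespace ChordDiagram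

variable {n : ℕ}

lemma relpos_eq_val_sub (b x : Fin (2 * n)) : relpos b x = (x - b).val := by
  rw [relpos, Fin.val_sub]
  congr 1
  have := b.isLt
  omega

lemma relpos_lt (b x : Fin (2 * n)) : relpos b x < 2 * n := by
  rw [relpos_eq_val_sub]
  exact (x - b).isLt

section Relpos

variable [NeZero n] {p x y : Fin (2 * n)}

lemma relpos_self (p : Fin (2 * n)) : relpos p p = 0 := by
  simp [relpos_eq_val_sub]

lemma relpos_add_one_self (p : Fin (2 * n)) : relpos (p + 1) p = 2 * n - 1 := by
  have : 1 < 2 * n := by have := NeZero.ne n; omega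
  rw [relpos_eq_val_sub, sub_add_cancel_left, Fin.val_neg, Fin.val_one', Nat.mod_eq_of_lt this]
  simp [Fin.ext_iff, Nat.mod_eq_of_lt this]

lemma relpos_add_one_add_one (h : x ≠ p) : relpos (p + 1) x + 1 = relpos p x := by
  have hne : x - p ≠ 0 := sub_ne_zero.mpr h
  rw [relpos_eq_val_sub, relpos_eq_val_sub, ← sub_sub, Fin.val_sub_one_of_ne_zero hne]
  have := Fin.pos_iff_ne_zero.mpr hne
  omega

lemma relpos_pos (h : x ≠ p) : 0 < relpos p x := by
  have := relpos_add_one_add_one h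
  omega

lemma relpos_add_one_lt_iff (hx : x ≠ p) (hy : y ≠ p) :
    relpos (p + 1) x < relpos (p + 1) y ↔ relpos p x < relpos p y := by
  have := relpos_add_one_add_one hx
  have := relpos_add_one_add_one hy
  omega

lemma relpos_add_one_lt_self (h : x ≠ p) : relpos (p + 1) x < relpos (p + 1) p := by
  have := relpos_add_one_add_one h
  have := relpos_lt p x
  rw [relpos_add_one_self]
  omega

end Relpos

section Labels

variable (D : ChordDiagram n)

lemma otherEnd_over (i : Fin n) : D.otherEnd (D.over' i) = D.under i := by
  simp [otherEnd, over', under]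

lemma tog_over (i : Fin n) : D.tog (D.over' i) = decide (D.sign i ≠ 1) := by
  by_cases hs : D.sign i = 1 <;> simp [tog, over', hs]

lemma tog_under (i : Fin n) : D.tog (D.under i) = decide (D.sign i = 1) := by
  by_cases hs : D.sign i = 1 <;> simp [tog, under, hs]

lemma tog_otherEnd (p : Fin (2 * n)) : D.tog (D.otherEnd p) = !D.tog p := by
  by_cases hs : D.sign (D.ep.symm p).1 = 1 <;> simp [tog, otherEnd, hs]

lemma arcLabel_add_one [NeZero n] (p : Fin (2 * n)) :
    D.arcLabel (p + 1) = D.arcLabel p + if D.tog p then 1 else -1 := by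
  obtain ⟨⟨i, b⟩, rfl⟩ := D.ep.surjective p
  let term (a : Fin (2 * n)) (j : Fin n) : ℤ :=
    if relpos a (D.over' j) < relpos a (D.under j) then D.sign j else 0
  have hlabel (a : Fin (2 * n)) : D.arcLabel a = term a i + ∑ j ∈ univ.erase i, term a j := by
    rw [arcLabel, sum_filter, add_sum_erase _ _ (mem_univ i)]
  have hrest :
      ∑ j ∈ univ.erase i, term (D.ep (i, b) + 1) j = ∑ j ∈ univ.erase i, term (D.ep (i, b)) j := by
    refine sum_congr rfl fun j hj => if_congr (relpos_add_one_lt_iff ?_ ?_) rfl rfl <;>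
      exact fun h => ne_of_mem_erase hj (congrArg Prod.fst (D.ep.injective h))
  rw [hlabel, hlabel, hrest]
  have hne : D.over' i ≠ D.under i := fun h => by simpa using D.ep.injective h
  cases b
  · change term (D.under i + 1) i + _ =
      term (D.under i) i + _ + if D.tog (D.under i) then 1 else -1
    have h1 : term (D.under i + 1) i = D.sign i := if_pos (relpos_add_one_lt_self hne)
    have h0 : term (D.under i) i = 0 := if_neg (by rw [relpos_self]; omega)
    rw [h1, h0, tog_under]
    rcases D.sign_unit i with hs | hs <;> simp [hs, add_comm]
  · change term (D.over' i + 1) i + _ =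
      term (D.over' i) i + _ + if D.tog (D.over' i) then 1 else -1
    have h0 : term (D.over' i + 1) i = 0 := if_neg (relpos_add_one_lt_self hne.symm).not_gt
    have h1 : term (D.over' i) i = D.sign i :=
      if_pos (by rw [relpos_self]; exact relpos_pos hne.symm)
    rw [h1, h0, tog_over]
    rcases D.sign_unit i with hs | hs <;> simp [hs, add_comm]

end Labels

section Faces

variable (D : ChordDiagram n)

abbrev Face : Type := MulAction.orbitRel.Quotient (Subgroup.zpowers D.facePerm) (Fin (2 * n) × Bool)

def face (d : Fin (2 * n) × Bool) : D.Face := Quotient.mk _ d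

lemma face_facePerm (d : Fin (2 * n) × Bool) : D.face (D.facePerm d) = D.face d :=
  Quotient.sound ⟨⟨D.facePerm, Subgroup.mem_zpowers _⟩, rfl⟩

lemma face_surjective : Function.Surjective D.face := Quotient.mk_surjective

section AlexanderNumbering

variable [NeZero n]

lemma arcPerm_true (p : Fin (2 * n)) : D.arcPerm (p, true) = (p + 1, false) := by
  simp [arcPerm, finRotate_apply]

lemma arcPerm_false (p : Fin (2 * n)) : D.arcPerm (p, false) = (p - 1, true) := by
  simp [arcPerm, finRotate_symm_apply]

lemma face_sub_one_true (p : Fin (2 * n)) :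
    D.face (p - 1, true) = D.face (D.otherEnd p, D.tog p) := by
  rw [← face_facePerm]
  simp [facePerm, arcPerm_true, vertexPerm]

lemma face_add_one_false (p : Fin (2 * n)) :
    D.face (p + 1, false) = D.face (D.otherEnd p, !D.tog p) := by
  rw [← face_facePerm]
  simp [facePerm, arcPerm_false, vertexPerm]

/-- The darts `(a, true)` and `(a + 1, false)` are the two ends of the arc `a` from endpoint `a`
to endpoint `a + 1`; their faces lie on the two sides of that arc. -/
def IsAlexanderNumbering (γ : D.Face → ℚ) : Prop :=
  ∀ a : Fin (2 * n), γ (D.face (a + 1, false)) - γ (D.face (a, true)) = 1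

end AlexanderNumbering

namespace IsAlexanderNumbering

variable {D} [NeZero n] {γ : D.Face → ℚ}

lemma apply_face_true_sub_apply_face_sub_one_true (hγ : D.IsAlexanderNumbering γ)
    (p : Fin (2 * n)) :
    γ (D.face (p, true)) - γ (D.face (p - 1, true)) = if D.tog p then 1 else -1 := by
  have hA := congrArg γ (D.face_sub_one_true p)
  have hB := congrArg γ (D.face_sub_one_true (D.otherEnd p))
  have hC := congrArg γ (D.face_add_one_false p)
  rw [otherEnd_otherEnd, tog_otherEnd] at hB
  have hp := hγ (p - 1)
  have hp' := hγ p
  have hq := hγ (D.otherEnd p - 1)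
  rw [sub_add_cancel] at hp hq
  cases ht : D.tog p <;>
    simp only [ht, Bool.not_false, Bool.not_true, Bool.false_eq_true, if_true, if_false]
      at hA hB hC ⊢ <;>
    linarith

lemma arcLabel_sub_arcLabel (hγ : D.IsAlexanderNumbering γ) (p q : Fin (2 * n)) :
    (D.arcLabel p - D.arcLabel q : ℚ) = γ (D.face (p - 1, true)) - γ (D.face (q - 1, true)) := by
  have hconst := Fin.apply_eq_of_forall_apply_add_one
    (f := fun a => γ (D.face (a, true)) - (D.arcLabel (a + 1) : ℚ)) fun a => by
      have hγa := hγ.apply_face_true_sub_apply_face_sub_one_true (a + 1)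
      rw [add_sub_cancel_right] at hγa
      rw [D.arcLabel_add_one (a + 1)]
      split_ifs at hγa ⊢ <;> push_cast <;> linarith
  have := hconst (p - 1) (q - 1)
  simp only [sub_add_cancel] at this
  linarith

lemma chordVal_eq_one (hγ : D.IsAlexanderNumbering γ) (i : Fin n) : D.chordVal i = 1 := by
  have hdiff := hγ.arcLabel_sub_arcLabel (D.over' i) (D.under i)
  have hA := congrArg γ (D.face_sub_one_true (D.over' i))
  rw [otherEnd_over, tog_over] at hA
  rcases D.sign_unit i with hs | hs
  · have hu := hγ (D.under i - 1)
    rw [sub_add_cancel] at hu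
    simp only [hs, ne_eq, not_true_eq_false, decide_false] at hA
    rw [chordVal, if_pos hs]
    exact_mod_cast (by linarith : (D.arcLabel (D.over' i) - D.arcLabel (D.under i) : ℚ) = 1)
  · have hneg : D.sign i ≠ 1 := by rw [hs]; norm_num
    have hu := hγ.apply_face_true_sub_apply_face_sub_one_true (D.under i)
    simp only [tog_under, hneg, ne_eq, not_false_eq_true, decide_true, decide_false,
      Bool.false_eq_true, if_false] at hA hu
    rw [chordVal, if_neg hneg, hs]
    have : (D.arcLabel (D.over' i) - D.arcLabel (D.under i) : ℚ) = -1 := by linarith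
    have : D.arcLabel (D.over' i) - D.arcLabel (D.under i) = -1 := by exact_mod_cast this
    omega

end IsAlexanderNumbering

end Faces

section Planarity

open Module LinearMap

variable (D : ChordDiagram n) [NeZero n]

def arcDiff : (D.Face → ℚ) →ₗ[ℚ] (Fin (2 * n) → ℚ) where
  toFun γ a := γ (D.face (a + 1, false)) - γ (D.face (a, true))
  map_add' _ _ := by ext; simp only [Pi.add_apply]; ring
  map_smul' _ _ := by ext; simp only [Pi.smul_apply, smul_eq_mul, RingHom.id_apply]; ring

def boundary : (Fin (2 * n) → ℚ) →ₗ[ℚ] (Fin n → ℚ) where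
  toFun x j := x (D.over' j) + x (D.under j) - x (D.over' j - 1) - x (D.under j - 1)
  map_add' _ _ := by ext; simp only [Pi.add_apply]; ring
  map_smul' _ _ := by ext; simp only [Pi.smul_apply, smul_eq_mul, RingHom.id_apply]; ring

lemma range_arcDiff_le_ker_boundary : range D.arcDiff ≤ ker D.boundary := by
  rintro _ ⟨β, rfl⟩
  ext j
  have hu : D.under j = D.otherEnd (D.over' j) := (D.otherEnd_over j).symm
  simp only [boundary, arcDiff, coe_mk, AddHom.coe_mk, Pi.zero_apply]
  rw [sub_add_cancel, sub_add_cancel, hu, face_sub_one_true, face_sub_one_true,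
    face_add_one_false, face_add_one_false, otherEnd_otherEnd, tog_otherEnd]
  cases D.tog (D.over' j) <;> simp only [Bool.not_false, Bool.not_true] <;> ring

lemma mem_range_boundary_of_sum_eq_zero {y : Fin n → ℚ} (hy : ∑ j, y j = 0) :
    y ∈ range D.boundary := by
  let v (p : Fin (2 * n)) : ℚ := y (D.ep.symm p).1 / 2
  have hv : ∑ p, v p = 0 := by
    rw [← Equiv.sum_comp D.ep, Fintype.sum_prod_type, ← hy]
    refine sum_congr rfl fun j _ => ?_
    simp only [v, Equiv.symm_apply_apply, Fintype.sum_bool]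
    ring
  obtain ⟨t, ht⟩ := Fin.exists_add_one_sub_eq_of_sum_eq_zero v hv
  refine ⟨fun p => t (p + 1), funext fun j => ?_⟩
  have ho := ht (D.over' j)
  have hu := ht (D.under j)
  simp only [v, over', under, Equiv.symm_apply_apply] at ho hu
  simp only [boundary, coe_mk, AddHom.coe_mk, sub_add_cancel, over', under]
  linarith

lemma finrank_ker_boundary_le : finrank ℚ (ker D.boundary) ≤ n + 1 := by
  let L : (Fin n → ℚ) →ₗ[ℚ] ℚ := ∑ j, proj j
  have hL (y : Fin n → ℚ) : L y = ∑ j, y j := by simp [L]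
  have hLsurj : range L = ⊤ := range_eq_top.mpr fun c => ⟨Pi.single 0 c, by simp [hL]⟩
  have hLker : ker L ≤ range D.boundary := fun y hy =>
    D.mem_range_boundary_of_sum_eq_zero (by rwa [mem_ker, hL] at hy)
  have rnL := finrank_range_add_finrank_ker L
  have rnB := finrank_range_add_finrank_ker D.boundary
  have := Submodule.finrank_mono hLker
  rw [hLsurj, finrank_top, finrank_self, finrank_fin_fun] at rnL
  rw [finrank_fin_fun] at rnB
  omega

lemma apply_eq_of_mem_ker_arcDiff {β : D.Face → ℚ} (hβ : β ∈ ker D.arcDiff) (F F' : D.Face) :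
    β F = β F' := by
  let g (d : Fin (2 * n) × Bool) : ℚ := β (D.face d)
  have harc (p : Fin (2 * n)) : g (p + 1, false) = g (p, true) :=
    sub_eq_zero.mp (congrFun hβ p)
  have hflip (p : Fin (2 * n)) : g (p, false) = g (p, true) := by
    have h₁ := congrArg β (D.face_sub_one_true p)
    have h₂ := congrArg β (D.face_add_one_false p)
    have h₃ := congrArg β (D.face_sub_one_true (D.otherEnd p))
    have h₄ := congrArg β (D.face_add_one_false (D.otherEnd p))
    have a₁ := harc (p - 1)
    have a₂ := harc (D.otherEnd p - 1)
    rw [otherEnd_otherEnd, tog_otherEnd] at h₃ h₄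
    simp only [g, sub_add_cancel] at harc a₁ a₂ ⊢
    rw [harc] at h₂ h₄
    cases ht : D.tog p <;> simp only [ht, Bool.not_false, Bool.not_true] at h₁ h₂ h₃ h₄ <;>
      linarith
  have hshift := Fin.apply_eq_of_forall_apply_add_one (f := fun p => g (p, true))
    fun p => (hflip (p + 1)).symm.trans (harc p)
  have hconst (d : Fin (2 * n) × Bool) : g d = g (0, true) := by
    obtain ⟨p, _ | _⟩ := d
    · exact (hflip p).trans (hshift 0 p)
    · exact hshift 0 p
  obtain ⟨d, rfl⟩ := D.face_surjective F
  obtain ⟨d', rfl⟩ := D.face_surjective F'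
  exact (hconst d).trans (hconst d').symm

lemma finrank_ker_arcDiff_le_one : finrank ℚ (ker D.arcDiff) ≤ 1 := by
  have hle : ker D.arcDiff ≤ Submodule.span ℚ {fun _ => 1} := fun β hβ =>
    Submodule.mem_span_singleton.mpr ⟨β (D.face (0, true)),
      funext fun F => by simpa using D.apply_eq_of_mem_ker_arcDiff hβ _ F⟩
  calc finrank ℚ (ker D.arcDiff) ≤ finrank ℚ (Submodule.span ℚ {fun _ : D.Face => (1 : ℚ)}) :=
        Submodule.finrank_mono hle
    _ ≤ 1 := (finrank_span_le_card _).trans (by simp)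

theorem exists_isAlexanderNumbering (h : D.PlanarRealizable) :
    ∃ γ, D.IsAlexanderNumbering γ := by
  have : Fintype D.Face := Fintype.ofFinite _
  have hfaces : finrank ℚ (D.Face → ℚ) = n + 2 := by
    rw [finrank_fintype_fun_eq_card, ← Nat.card_eq_fintype_card]
    exact h
  have rnA := finrank_range_add_finrank_ker D.arcDiff
  have hrange : range D.arcDiff = ker D.boundary :=
    Submodule.eq_of_le_of_finrank_le D.range_arcDiff_le_ker_boundary
      (by linarith [D.finrank_ker_boundary_le, D.finrank_ker_arcDiff_le_one])
  have hone : (1 : Fin (2 * n) → ℚ) ∈ ker D.boundary := by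
    ext j
    simp [boundary]
  rw [← hrange] at hone
  obtain ⟨γ, hγ⟩ := hone
  exact ⟨γ, congrFun hγ⟩

end Planarity

end ChordDiagram

open ChordDiagram

/-- for every classical (planar-realizable) knot diagram every
crossing `c` satisfies `N(c) = 1`; consequently `Σ_c w(c) t^{N(c)} = w(K) · t` and
the invariant `F_K(t) = Σ_c w(c) t^{N(c)} - w(K) t` vanishes identically. -/
theorem stmt_17 {n : ℕ} (D : ChordDiagram n) (h : D.PlanarRealizable) :
    (∀ i : Fin n, D.chordVal i = 1) ∧
    (∑ i : Fin n, C (D.sign i) * T (D.chordVal i)) = C (∑ i : Fin n, D.sign i) * T 1 ∧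
    (∑ i : Fin n, C (D.sign i) * T (D.chordVal i)) - C (∑ i : Fin n, D.sign i) * T 1 = 0 := by
  have hval (i : Fin n) : D.chordVal i = 1 := by
    have := NeZero.of_pos i.pos
    obtain ⟨γ, hγ⟩ := D.exists_isAlexanderNumbering h
    exact hγ.chordVal_eq_one i
  have hsum : (∑ i : Fin n, C (D.sign i) * T (D.chordVal i)) = C (∑ i : Fin n, D.sign i) * T 1 := by
    simp_rw [hval, ← sum_mul, map_sum]
  exact ⟨hval, hsum, sub_eq_zero.mpr hsum⟩
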